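/- Let r₀ > 0, δ ≥ 0, D > 0, and let h : [0,∞) → ℝ be a backward profile function with area radius r₀ and Hawking mass bound δ. Let h_E(σ) = max(r₀ − σ, 0) be the Euclidean backward profile, whose derivative is h_E'(σ) = −1 for σ < r₀ and h_E'(σ) = 0 for σ > r₀. Then ∫₀^D ( h(σ)² − h_E(σ)² )² · 4π·h_E(σ)² dσ + ∫₀^D ( 2·h(σ)·h'(σ) − 2·h_E(σ)·h_E'(σ) )² · 4π·h_E(σ)² dσ ≤ (1 + r₀²)·( 16·√π · r₀² · δ^{1/3} · D^{1/6} )². -/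

import Mathlib

/-!
On `[0, r₀]` the profile is squeezed between `r₀ - σ` and `r₀`, and the mass bound gives
`(h² - (r₀ - σ)²)' = 2hh' + 2(r₀ - σ) ≤ 4δ`, so `0 ≤ h² - h_E² ≤ r₀ t` with `t = min(4δ, r₀)`.
Both weighted integrands are then bounded by multiples of `r₀⁴ t²` and `r₀² t²`, and they vanish
beyond `r₀`, where `h_E = 0`. This bounds the left side by `4π r₀² (r₀² + 4) t² min(D, r₀)`, and
comparing cubes gives `t² min(D, r₀) ≤ 4 δ^{2/3} D^{1/3} r₀²`.
-/

open Real intervalIntegral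

/-- A *backward profile function* with area radius `r₀` and Hawking mass
bound `δ`: a differentiable function `h : [0,∞) → ℝ` with `h(0) = r₀`,
`−1 ≤ h'(σ) ≤ 0` and `h(σ)·(1 − h'(σ)²) ≤ 2δ` for all `σ ≥ 0`. -/
def IsBackwardProfile (r₀ δ : ℝ) (h : ℝ → ℝ) : Prop :=
  h 0 = r₀
  ∧ (∀ σ ≥ (0:ℝ), DifferentiableAt ℝ h σ)
  ∧ (∀ σ ≥ (0:ℝ), -1 ≤ deriv h σ ∧ deriv h σ ≤ 0)
  ∧ (∀ σ ≥ (0:ℝ), h σ * (1 - (deriv h σ) ^ 2) ≤ 2 * δ)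

/-- The Euclidean backward profile `h_E(σ) = max(r₀ − σ, 0)`. -/
noncomputable def euclideanBackwardProfile (r₀ : ℝ) : ℝ → ℝ :=
  fun σ => max (r₀ - σ) 0

/-- The derivative of the Euclidean backward profile: `−1` for `σ < r₀`
and `0` for `σ ≥ r₀` (its value at the single point `σ = r₀` is immaterial). -/
noncomputable def euclideanBackwardProfileDeriv (r₀ : ℝ) : ℝ → ℝ :=
  fun σ => if σ < r₀ then -1 else 0

open Set

lemma sub_le_mul_sub_of_hasDerivAt_le {f f' : ℝ → ℝ} {a b C : ℝ} (hab : a ≤ b)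
    (hf : ∀ x ∈ Icc a b, HasDerivAt f (f' x) x) (hC : ∀ x ∈ Icc a b, f' x ≤ C) :
    f b - f a ≤ C * (b - a) := by
  refine (convex_Icc a b).image_sub_le_mul_sub_of_deriv_le
    (fun x hx => (hf x hx).continuousAt.continuousWithinAt)
    (fun x hx => (hf x (interior_subset hx)).differentiableAt.differentiableWithinAt)
    (fun x hx => ?_) a (left_mem_Icc.2 hab) b (right_mem_Icc.2 hab) hab
  rw [(hf x (interior_subset hx)).deriv]
  exact hC x (interior_subset hx)

lemma norm_integral_le_of_norm_le_const_of_forall_gt_eq_zero {E : Type*}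
    [NormedAddCommGroup E] [NormedSpace ℝ E] {g : ℝ → E} {a b r C : ℝ}
    (hab : a ≤ b) (har : a ≤ r) (hzero : ∀ x, r < x → g x = 0)
    (hbound : ∀ x ∈ Ioc a (min b r), ‖g x‖ ≤ C) :
    ‖∫ x in a..b, g x‖ ≤ C * (min b r - a) := by
  have ham : a ≤ min b r := le_min hab har
  have hrestrict : ∫ x in a..b, g x = ∫ x in a..min b r, g x := by
    rw [integral_of_le hab, integral_of_le ham]
    refine MeasureTheory.setIntegral_eq_of_subset_of_forall_sdiff_eq_zero measurableSet_Ioc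
      (Ioc_subset_Ioc_right (min_le_left b r)) fun x hx => hzero x ?_
    simp only [mem_sdiff, mem_Ioc, not_and, not_le] at hx
    exact (min_lt_iff.1 (hx.2 hx.1.1)).resolve_left hx.1.2.not_gt
  rw [hrestrict, ← abs_of_nonneg (sub_nonneg.2 ham)]
  exact norm_integral_le_of_norm_le_const (by rwa [uIoc_of_le ham])

lemma sq_mul_le_of_le_pow_three_of_le_pow_six {t m x y r : ℝ} (ht : 0 ≤ t) (hm : 0 ≤ m)
    (htx : t ≤ x ^ 3) (htr : t ≤ r) (hmy : m ≤ y ^ 6) (hmr : m ≤ r) :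
    t ^ 2 * m ≤ (x * y * r) ^ 2 := by
  refine le_of_pow_le_pow_left₀ three_ne_zero (sq_nonneg _) ?_
  calc (t ^ 2 * m) ^ 3 = t ^ 2 * t ^ 4 * m * m ^ 2 := by ring
    _ ≤ (x ^ 3) ^ 2 * r ^ 4 * y ^ 6 * r ^ 2 := by gcongr
    _ = ((x * y * r) ^ 2) ^ 3 := by ring

lemma rpow_one_div_natCast_pow {x : ℝ} (hx : 0 ≤ x) {n : ℕ} (hn : n ≠ 0) :
    (x ^ ((1:ℝ) / n)) ^ n = x := by
  rw [one_div]
  exact rpow_inv_natCast_pow hx hn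

section EuclideanProfile

variable {r₀ σ : ℝ}

theorem euclideanBackwardProfile_of_le (hσ : σ ≤ r₀) :
    euclideanBackwardProfile r₀ σ = r₀ - σ :=
  max_eq_left (sub_nonneg.2 hσ)

theorem euclideanBackwardProfile_of_ge (hσ : r₀ ≤ σ) : euclideanBackwardProfile r₀ σ = 0 :=
  max_eq_right (sub_nonpos.2 hσ)

theorem euclideanBackwardProfile_mul_deriv (r₀ σ : ℝ) :
    euclideanBackwardProfile r₀ σ * euclideanBackwardProfileDeriv r₀ σ =
      -euclideanBackwardProfile r₀ σ := by
  unfold euclideanBackwardProfileDeriv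
  split_ifs with hσ
  · ring
  · rw [euclideanBackwardProfile_of_ge (not_lt.1 hσ)]
    ring

end EuclideanProfile

namespace IsBackwardProfile

variable {r₀ δ σ D : ℝ} {h : ℝ → ℝ}

theorem hasDerivAt (hp : IsBackwardProfile r₀ δ h) (hσ : 0 ≤ σ) :
    HasDerivAt h (deriv h σ) σ :=
  (hp.2.1 σ hσ).hasDerivAt

theorem le_radius (hp : IsBackwardProfile r₀ δ h) (hσ : 0 ≤ σ) : h σ ≤ r₀ := by
  have := sub_le_mul_sub_of_hasDerivAt_le hσ (fun x hx => hp.hasDerivAt hx.1)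
    (fun x hx => (hp.2.2.1 x hx.1).2)
  linarith [hp.1]

theorem radius_sub_le (hp : IsBackwardProfile r₀ δ h) (hσ : 0 ≤ σ) : r₀ - σ ≤ h σ := by
  have := sub_le_mul_sub_of_hasDerivAt_le (f := fun x => -h x) hσ
    (fun x hx => (hp.hasDerivAt hx.1).neg) (fun x hx => neg_le.2 (hp.2.2.1 x hx.1).1)
  linarith [hp.1]

/-- Since `1 - h' ≥ 1`, the mass bound gives `h (1 + h') ≤ 2δ`, and `r₀ - σ ≤ h`. -/
theorem two_mul_deriv_add_le (hp : IsBackwardProfile r₀ δ h) (hσ : 0 ≤ σ) (hσr : σ ≤ r₀) :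
    2 * h σ * deriv h σ + 2 * (r₀ - σ) ≤ 4 * δ := by
  have hlow := hp.radius_sub_le hσ
  obtain ⟨hd₁, hd₂⟩ := hp.2.2.1 σ hσ
  have hmass := hp.2.2.2 σ hσ
  have : 0 ≤ h σ * (1 + deriv h σ) * -deriv h σ :=
    mul_nonneg (mul_nonneg (by linarith) (by linarith)) (by linarith)
  nlinarith

theorem sq_sub_sq_le (hp : IsBackwardProfile r₀ δ h) (hσ : 0 ≤ σ) (hσr : σ ≤ r₀) :
    h σ ^ 2 - (r₀ - σ) ^ 2 ≤ 4 * δ * σ := by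
  have := sub_le_mul_sub_of_hasDerivAt_le (f := fun x => h x ^ 2 - (r₀ - x) ^ 2)
    (f' := fun x => 2 * h x * deriv h x + 2 * (r₀ - x)) hσ
    (fun x hx => (((hp.hasDerivAt hx.1).fun_pow 2).fun_sub
      (((hasDerivAt_id' x).const_sub r₀).fun_pow 2)).congr_deriv (by push_cast; ring))
    (fun x hx => hp.two_mul_deriv_add_le hx.1 (hx.2.trans hσr))
  simpa [hp.1] using this

theorem sq_sub_sq_le_mul_min (hp : IsBackwardProfile r₀ δ h) (hδ : 0 ≤ δ) (hσ : 0 ≤ σ)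
    (hσr : σ ≤ r₀) : h σ ^ 2 - (r₀ - σ) ^ 2 ≤ r₀ * min (4 * δ) r₀ := by
  have hup := hp.le_radius hσ
  have hlow := hp.radius_sub_le hσ
  rw [mul_min_of_nonneg _ _ (hσ.trans hσr)]
  refine le_min ?_ ?_
  · nlinarith [hp.sq_sub_sq_le hσ hσr]
  · nlinarith

theorem abs_sq_sub_sq_mul_le (hp : IsBackwardProfile r₀ δ h) (hδ : 0 ≤ δ) (hσ : 0 ≤ σ)
    (hσr : σ ≤ r₀) :
    |(h σ ^ 2 - (r₀ - σ) ^ 2) * (r₀ - σ)| ≤ r₀ ^ 2 * min (4 * δ) r₀ := by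
  have hu : 0 ≤ r₀ - σ := sub_nonneg.2 hσr
  have hf₀ : 0 ≤ h σ ^ 2 - (r₀ - σ) ^ 2 := by nlinarith [hp.radius_sub_le hσ]
  have ht : 0 ≤ min (4 * δ) r₀ := le_min (by positivity) (hσ.trans hσr)
  rw [abs_of_nonneg (mul_nonneg hf₀ hu)]
  calc _ ≤ r₀ * min (4 * δ) r₀ * r₀ :=
        mul_le_mul (hp.sq_sub_sq_le_mul_min hδ hσ hσr) (by linarith) hu
          (mul_nonneg (hσ.trans hσr) ht)
    _ = r₀ ^ 2 * min (4 * δ) r₀ := by ring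

theorem abs_mul_deriv_add_mul_le (hp : IsBackwardProfile r₀ δ h) (hδ : 0 ≤ δ) (hσ : 0 ≤ σ)
    (hσr : σ ≤ r₀) :
    |(h σ * deriv h σ + (r₀ - σ)) * (r₀ - σ)| ≤ r₀ * min (4 * δ) r₀ := by
  have hlow := hp.radius_sub_le hσ
  obtain ⟨hd₁, hd₂⟩ := hp.2.2.1 σ hσ
  have hu : 0 ≤ r₀ - σ := sub_nonneg.2 hσr
  have hh : 0 ≤ h σ := hu.trans hlow
  refine abs_le.2 ⟨?_, ?_⟩
  · nlinarith [hp.sq_sub_sq_le_mul_min hδ hσ hσr,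
      mul_nonneg (mul_nonneg hh (by linarith : 0 ≤ 1 + deriv h σ)) hu]
  · rw [mul_min_of_nonneg _ _ (hσ.trans hσr)]
    refine le_min ?_ ?_
    · nlinarith [hp.two_mul_deriv_add_le hσ hσr]
    · nlinarith [mul_nonneg (mul_nonneg hh (by linarith : 0 ≤ -deriv h σ)) hu]

theorem integral_sq_sub_sq_le (hp : IsBackwardProfile r₀ δ h) (hr : 0 ≤ r₀) (hδ : 0 ≤ δ)
    (hD : 0 ≤ D) :
    ∫ σ in (0:ℝ)..D, (h σ ^ 2 - euclideanBackwardProfile r₀ σ ^ 2) ^ 2 *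
        (4 * π * euclideanBackwardProfile r₀ σ ^ 2)
      ≤ 4 * π * (r₀ ^ 2 * min (4 * δ) r₀) ^ 2 * min D r₀ := by
  refine (Real.le_norm_self _).trans <| (norm_integral_le_of_norm_le_const_of_forall_gt_eq_zero
    (C := 4 * π * (r₀ ^ 2 * min (4 * δ) r₀) ^ 2) hD hr (fun σ hσ => ?_) fun σ hσ => ?_).trans_eq
    (by rw [sub_zero])
  · rw [euclideanBackwardProfile_of_ge hσ.le]
    ring
  · have hσr := hσ.2.trans (min_le_right D r₀)
    calc _ = 4 * π * |(h σ ^ 2 - (r₀ - σ) ^ 2) * (r₀ - σ)| ^ 2 := by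
          rw [euclideanBackwardProfile_of_le hσr, Real.norm_eq_abs, sq_abs,
            abs_of_nonneg (by positivity)]
          ring
      _ ≤ _ := by gcongr; exact hp.abs_sq_sub_sq_mul_le hδ hσ.1.le hσr

theorem integral_mul_deriv_sub_le (hp : IsBackwardProfile r₀ δ h) (hr : 0 ≤ r₀)
    (hδ : 0 ≤ δ) (hD : 0 ≤ D) :
    ∫ σ in (0:ℝ)..D, (2 * h σ * deriv h σ
        - 2 * euclideanBackwardProfile r₀ σ * euclideanBackwardProfileDeriv r₀ σ) ^ 2 *
        (4 * π * euclideanBackwardProfile r₀ σ ^ 2)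
      ≤ 16 * π * (r₀ * min (4 * δ) r₀) ^ 2 * min D r₀ := by
  refine (Real.le_norm_self _).trans <| (norm_integral_le_of_norm_le_const_of_forall_gt_eq_zero
    (C := 16 * π * (r₀ * min (4 * δ) r₀) ^ 2) hD hr (fun σ hσ => ?_) fun σ hσ => ?_).trans_eq
    (by rw [sub_zero])
  · rw [euclideanBackwardProfile_of_ge hσ.le]
    ring
  · have hσr := hσ.2.trans (min_le_right D r₀)
    calc _ = 16 * π * |(h σ * deriv h σ + (r₀ - σ)) * (r₀ - σ)| ^ 2 := by
          rw [mul_assoc 2 (euclideanBackwardProfile r₀ σ), euclideanBackwardProfile_mul_deriv,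
            euclideanBackwardProfile_of_le hσr, Real.norm_eq_abs, sq_abs,
            abs_of_nonneg (by positivity)]
          ring
      _ ≤ _ := by gcongr; exact hp.abs_mul_deriv_add_mul_le hδ hσ.1.le hσr

end IsBackwardProfile

/-- **Sobolev stability without diffeomorphisms.**
If `h` is a backward profile function with area radius `r₀ > 0` and Hawking
mass bound `δ ≥ 0`, then for any `D > 0` the squared weighted `H¹[0,D]` norm
of `h² − h_E²` (with `h_E(σ) = max(r₀ − σ, 0)` the Euclidean backward profile)
is at most `(1 + r₀²)·(16√π·r₀²·δ^(1/3)·D^(1/6))²`. -/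
theorem sobolev_stability_no_diffeo
    (r₀ δ D : ℝ) (hr : 0 < r₀) (hδ : 0 ≤ δ) (hD : 0 < D)
    (h : ℝ → ℝ) (hprof : IsBackwardProfile r₀ δ h) :
    (∫ σ in (0:ℝ)..D,
        ((h σ) ^ 2 - (euclideanBackwardProfile r₀ σ) ^ 2) ^ 2 *
          (4 * π * (euclideanBackwardProfile r₀ σ) ^ 2))
      + (∫ σ in (0:ℝ)..D,
          (2 * h σ * deriv h σ
              - 2 * euclideanBackwardProfile r₀ σ * euclideanBackwardProfileDeriv r₀ σ) ^ 2 *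
            (4 * π * (euclideanBackwardProfile r₀ σ) ^ 2))
    ≤ (1 + r₀ ^ 2) *
        (16 * Real.sqrt π * r₀ ^ 2 * δ ^ ((1:ℝ)/3) * D ^ ((1:ℝ)/6)) ^ 2 := by
  set a := δ ^ ((1:ℝ) / 3)
  set b := D ^ ((1:ℝ) / 6)
  set t := min (4 * δ) r₀
  set m := min D r₀
  have ha : a ^ 3 = δ := by exact_mod_cast rpow_one_div_natCast_pow hδ (n := 3) three_ne_zero
  have hb : b ^ 6 = D := by exact_mod_cast rpow_one_div_natCast_pow hD.le (n := 6) (by norm_num)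
  have hinterp : t ^ 2 * m ≤ (2 * a * b * r₀) ^ 2 :=
    sq_mul_le_of_le_pow_three_of_le_pow_six (le_min (by positivity) hr.le)
      (le_min hD.le hr.le) ((min_le_left _ _).trans (by rw [mul_pow, ha]; linarith))
      (min_le_right _ _) (hb ▸ min_le_left _ _) (min_le_right _ _)
  have hK : 0 ≤ π * r₀ ^ 4 * a ^ 2 * b ^ 2 := by positivity
  calc _ ≤ 4 * π * (r₀ ^ 2 * t) ^ 2 * m + 16 * π * (r₀ * t) ^ 2 * m :=
        add_le_add (hprof.integral_sq_sub_sq_le hr.le hδ hD.le)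
          (hprof.integral_mul_deriv_sub_le hr.le hδ hD.le)
    _ = 4 * π * r₀ ^ 2 * (r₀ ^ 2 + 4) * (t ^ 2 * m) := by ring
    _ ≤ 4 * π * r₀ ^ 2 * (r₀ ^ 2 + 4) * (2 * a * b * r₀) ^ 2 := by gcongr
    _ ≤ (1 + r₀ ^ 2) * (16 * sqrt π * r₀ ^ 2 * a * b) ^ 2 := by
        simp only [mul_pow, sq_sqrt pi_pos.le]
        nlinarith [mul_nonneg hK (sq_nonneg r₀)]
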